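/- arXiv:2102.10672 — 3 statements merged into one kernel-verified Lean document; each statement's English description precedes it below -/
import Mathlib

section
/- For every probability mass function ν = (ν_1, ν_2, …) on the positive integers there exists x ∈ [0, 1/e) such that Σ_{n≥1} ν_n p_n(x) > Σ_{n≥1} ν_n p_n(1/e). In other words, against every prior distribution ν for the number of items, some x-strategy with x < 1/e strictly outperforms the 1/e-strategy, so the 1/e-strategy is never ν-optimal. -/
open Finset Real

/-- `p_n(x) = 1 - x - Σ_{k=2}^{n} (1-x)^k/(k(k-1))`, the winning probability of the
`x`-strategy with `n` items. -/
noncomputable def pwin (n : ℕ) (x : ℝ) : ℝ :=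
  1 - x - ∑ k ∈ Finset.Icc 2 n, (1 - x) ^ k / ((k : ℝ) * ((k : ℝ) - 1))

/-!
Each `p_{n+1}` is concave with `-p_{n+1}'(x) = 1 - Σ_{j=1}^{n} (1-x)^j/j`, so for `x ≤ c` the
tangent line at `x` gives `p_{n+1}(x) - p_{n+1}(c) ≥ (c - x) (1 - Σ_{j=1}^{n} (1-x)^j/j)`.
At `x = c ≥ 1/e` every such slope is positive, the partial sums of `-log c ≤ 1` staying
below `1`. Their `ν`-average is continuous in `x`, hence still positive slightly to the left
of `c`, and there the `x`-strategy beats the `c`-strategy.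
-/

open Filter Topology Set

lemma pow_succ_sub_pow_succ_le_mul {R : Type*} [CommRing R] [LinearOrder R] [IsStrictOrderedRing R]
    {a b : R} (hb : 0 ≤ b) (hba : b ≤ a) (k : ℕ) :
    a ^ (k + 1) - b ^ (k + 1) ≤ (k + 1) * (a - b) * a ^ k := by
  induction k with
  | zero => simp
  | succ k ih =>
    have ha : 0 ≤ a := hb.trans hba
    have hab : 0 ≤ a - b := sub_nonneg.mpr hba
    calc a ^ (k + 2) - b ^ (k + 2) = a * (a ^ (k + 1) - b ^ (k + 1)) + b ^ (k + 1) * (a - b) := by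
          ring
      _ ≤ a * ((k + 1) * (a - b) * a ^ k) + a ^ (k + 1) * (a - b) := by gcongr
      _ = (↑(k + 1) + 1) * (a - b) * a ^ (k + 1) := by push_cast; ring

lemma sum_range_pow_div_le_neg_log {t : ℝ} (ht0 : 0 ≤ t) (ht1 : t < 1) (n : ℕ) :
    ∑ j ∈ range n, t ^ (j + 1) / (j + 1) ≤ -log (1 - t) :=
  sum_le_hasSum _ (fun j _ => by positivity)
    (hasSum_pow_div_log_of_abs_lt_one (by rwa [abs_of_nonneg ht0]))

lemma sum_range_pow_div_lt_neg_log {t : ℝ} (ht0 : 0 < t) (ht1 : t < 1) (n : ℕ) :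
    ∑ j ∈ range n, t ^ (j + 1) / (j + 1) < -log (1 - t) :=
  calc ∑ j ∈ range n, t ^ (j + 1) / (j + 1)
      < ∑ j ∈ range (n + 1), t ^ (j + 1) / (j + 1) := by
        rw [sum_range_succ]; exact lt_add_of_pos_right _ (by positivity)
    _ ≤ -log (1 - t) := sum_range_pow_div_le_neg_log ht0.le ht1 _

lemma pwin_succ (n : ℕ) (x : ℝ) :
    pwin (n + 1) x = 1 - x - ∑ j ∈ range n, (1 - x) ^ (j + 2) / ((j + 2) * (j + 1)) := by
  rw [pwin, ← Finset.Ico_add_one_right_eq_Icc, Finset.sum_Ico_eq_sum_range]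
  simp only [show n + 1 + 1 - 2 = n by omega]
  congr 2 with j
  push_cast
  ring_nf

lemma sum_range_pow_div_mul_le_one {t : ℝ} (ht0 : 0 ≤ t) (ht1 : t ≤ 1) (n : ℕ) :
    ∑ j ∈ range n, t ^ (j + 2) / ((j + 2) * (j + 1)) ≤ 1 :=
  calc ∑ j ∈ range n, t ^ (j + 2) / ((j + 2) * (j + 1))
      ≤ ∑ j ∈ range n, (1 / ((j : ℝ) + 1) - 1 / (((j + 1 : ℕ) : ℝ) + 1)) := by
        gcongr with j
        calc t ^ (j + 2) / ((j + 2) * (j + 1)) ≤ 1 / ((j + 2) * (j + 1)) := by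
              gcongr; exact pow_le_one₀ ht0 ht1
          _ = _ := by push_cast; field_simp; ring
    _ = 1 - 1 / ((n : ℝ) + 1) := by rw [sum_range_sub']; norm_num
    _ ≤ 1 := sub_le_self _ (by positivity)

lemma abs_pwin_succ_le_two {x : ℝ} (hx0 : 0 ≤ x) (hx1 : x ≤ 1) (n : ℕ) :
    |pwin (n + 1) x| ≤ 2 := by
  have hT := sum_range_pow_div_mul_le_one (sub_nonneg.mpr hx1) (by linarith) n
  have hT0 : 0 ≤ ∑ j ∈ range n, (1 - x) ^ (j + 2) / ((j + 2) * (j + 1) : ℝ) :=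
    sum_nonneg fun j _ => div_nonneg (pow_nonneg (by linarith) _) (by positivity)
  rw [pwin_succ, abs_le]
  constructor <;> linarith

/-- `pwinNegSlope n x = -(d/dx) pwin (n + 1) x`. -/
noncomputable def pwinNegSlope (n : ℕ) (x : ℝ) : ℝ :=
  1 - ∑ j ∈ range n, (1 - x) ^ (j + 1) / (j + 1)

lemma pwinNegSlope_mul_le_pwin_sub {x y : ℝ} (hxy : x ≤ y) (hy1 : y ≤ 1) (n : ℕ) :
    (y - x) * pwinNegSlope n x ≤ pwin (n + 1) x - pwin (n + 1) y := by
  rw [pwin_succ, pwin_succ, pwinNegSlope, mul_sub, mul_one, mul_sum]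
  suffices ∑ j ∈ range n, ((1 - x) ^ (j + 2) / ((j + 2) * (j + 1)) -
      (1 - y) ^ (j + 2) / ((j + 2) * (j + 1))) ≤
      ∑ j ∈ range n, (y - x) * ((1 - x) ^ (j + 1) / (j + 1)) by
    rw [sum_sub_distrib] at this; linarith
  gcongr with j
  rw [← sub_div, div_le_iff₀ (by positivity)]
  calc (1 - x) ^ (j + 1 + 1) - (1 - y) ^ (j + 1 + 1)
      ≤ (↑(j + 1) + 1) * ((1 - x) - (1 - y)) * (1 - x) ^ (j + 1) :=
        pow_succ_sub_pow_succ_le_mul (by linarith) (by linarith) (j + 1)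
    _ = _ := by push_cast; field_simp; ring

lemma abs_pwinNegSlope_le {x : ℝ} (hx0 : 0 < x) (hx1 : x ≤ 1) (n : ℕ) :
    |pwinNegSlope n x| ≤ 1 - log x := by
  have hS := sum_range_pow_div_le_neg_log (sub_nonneg.mpr hx1) (by linarith) n
  have hS0 : 0 ≤ ∑ j ∈ range n, (1 - x) ^ (j + 1) / (j + 1) :=
    sum_nonneg fun j _ => div_nonneg (pow_nonneg (by linarith) _) (by positivity)
  rw [sub_sub_cancel] at hS
  rw [pwinNegSlope, abs_le]
  constructor <;> linarith

lemma pwinNegSlope_pos {x : ℝ} (hx : exp (-1) ≤ x) (hx1 : x < 1) (n : ℕ) :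
    0 < pwinNegSlope n x := by
  have hS := sum_range_pow_div_lt_neg_log (sub_pos.mpr hx1) (by linarith [exp_pos (-1)]) n
  rw [sub_sub_cancel] at hS
  have : -1 ≤ log x := by rwa [le_log_iff_exp_le (by linarith [exp_pos (-1)])]
  rw [pwinNegSlope]
  linarith

section Mixture

variable {ν : ℕ → ℝ}

lemma summable_mul_pwin_succ (hν : Summable ν) {x : ℝ} (hx0 : 0 ≤ x) (hx1 : x ≤ 1) :
    Summable fun n => ν n * pwin (n + 1) x :=
  Summable.of_norm_bounded (hν.abs.mul_right 2) fun n => by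
    rw [norm_mul, norm_eq_abs, norm_eq_abs]
    gcongr
    exact abs_pwin_succ_le_two hx0 hx1 n

lemma summable_mul_pwinNegSlope (hν : Summable ν) {x : ℝ} (hx0 : 0 < x) (hx1 : x ≤ 1) :
    Summable fun n => ν n * pwinNegSlope n x :=
  Summable.of_norm_bounded (hν.abs.mul_right (1 - log x)) fun n => by
    rw [norm_mul, norm_eq_abs, norm_eq_abs]
    gcongr
    exact abs_pwinNegSlope_le hx0 hx1 n

lemma continuousOn_tsum_mul_pwinNegSlope (hν : Summable ν) {a : ℝ} (ha : 0 < a) :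
    ContinuousOn (fun x => ∑' n, ν n * pwinNegSlope n x) (Ioo a 1) :=
  continuousOn_tsum (fun n => by unfold pwinNegSlope; fun_prop) (hν.abs.mul_right (1 - log a))
    fun n x hx => by
      rw [norm_mul, norm_eq_abs, norm_eq_abs]
      gcongr
      exact (abs_pwinNegSlope_le (ha.trans hx.1) hx.2.le n).trans
        (by gcongr; exact hx.1.le)

lemma sub_mul_tsum_mul_pwinNegSlope_le (hν0 : ∀ n, 0 ≤ ν n) (hν : Summable ν) {x y : ℝ}
    (hx0 : 0 < x) (hxy : x ≤ y) (hy1 : y ≤ 1) :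
    (y - x) * ∑' n, ν n * pwinNegSlope n x ≤
      ∑' n, ν n * pwin (n + 1) x - ∑' n, ν n * pwin (n + 1) y := by
  have hsx := summable_mul_pwin_succ hν hx0.le (hxy.trans hy1)
  have hsy := summable_mul_pwin_succ hν (hx0.le.trans hxy) hy1
  rw [← tsum_mul_left, ← hsx.tsum_sub hsy]
  refine Summable.tsum_le_tsum (fun n => ?_)
    ((summable_mul_pwinNegSlope hν hx0 (hxy.trans hy1)).mul_left _) (hsx.sub hsy)
  calc (y - x) * (ν n * pwinNegSlope n x) = ν n * ((y - x) * pwinNegSlope n x) := by ring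
    _ ≤ ν n * (pwin (n + 1) x - pwin (n + 1) y) := by
        gcongr
        · exact hν0 n
        · exact pwinNegSlope_mul_le_pwin_sub hxy hy1 n
    _ = ν n * pwin (n + 1) x - ν n * pwin (n + 1) y := mul_sub _ _ _

lemma exists_lt_tsum_mul_pwinNegSlope_pos (hν0 : ∀ n, 0 ≤ ν n) (hν1 : HasSum ν 1) {c : ℝ}
    (hc : exp (-1) ≤ c) (hc1 : c < 1) :
    ∃ x, 0 < x ∧ x < c ∧ 0 < ∑' n, ν n * pwinNegSlope n x := by
  have hc0 : 0 < c := (exp_pos _).trans_le hc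
  obtain ⟨i, hi⟩ : ∃ i, 0 < ν i := by
    by_contra! h
    have : ν = 0 := funext fun n => le_antisymm (h n) (hν0 n)
    exact one_ne_zero (hν1.unique (this ▸ hasSum_zero))
  have hpos : 0 < ∑' n, ν n * pwinNegSlope n c :=
    (summable_mul_pwinNegSlope hν1.summable hc0 hc1.le).tsum_pos
      (fun n => mul_nonneg (hν0 n) (pwinNegSlope_pos hc hc1 n).le) i
      (mul_pos hi (pwinNegSlope_pos hc hc1 i))
  have hcont := (continuousOn_tsum_mul_pwinNegSlope hν1.summable (half_pos hc0)).continuousAt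
    (isOpen_Ioo.mem_nhds ⟨half_lt_self hc0, hc1⟩)
  have hev : ∀ᶠ x in 𝓝[<] c, 0 < x ∧ 0 < ∑' n, ν n * pwinNegSlope n x :=
    nhdsWithin_le_nhds ((lt_mem_nhds hc0).and (hcont.eventually (lt_mem_nhds hpos)))
  obtain ⟨x, ⟨hx0, hx⟩, hxc⟩ := (hev.and self_mem_nhdsWithin).exists
  exact ⟨x, hx0, hxc, hx⟩

end Mixture

/-- `ν n` is the probability of `n + 1` items. -/
theorem stmt10 (ν : ℕ → ℝ) (hν0 : ∀ n, 0 ≤ ν n) (hν1 : HasSum ν 1) :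
    ∃ x : ℝ, 0 ≤ x ∧ x < (Real.exp 1)⁻¹ ∧
      (∑' n : ℕ, ν n * pwin (n + 1) (Real.exp 1)⁻¹) < ∑' n : ℕ, ν n * pwin (n + 1) x := by
  have hc1 : (exp 1)⁻¹ < 1 := inv_lt_one_of_one_lt₀ (one_lt_exp_iff.mpr one_pos)
  obtain ⟨x, hx0, hxc, hpos⟩ :=
    exists_lt_tsum_mul_pwinNegSlope_pos hν0 hν1 (exp_neg 1).le hc1
  refine ⟨x, hx0.le, hxc, ?_⟩
  have := sub_mul_tsum_mul_pwinNegSlope_le hν0 hν1.summable hx0 hxc.le hc1.le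
  linarith [mul_pos (sub_pos.mpr hxc) hpos]
end

section
/- The game restricted to x-strategies has value 1/e: sup_{x∈[0,1]} inf_{n≥1} p_n(x) = inf_{n≥1} sup_{x∈[0,1]} p_n(x) = 1/e. Moreover, for every probability mass function ν on the positive integers, Σ_{n≥1} ν_n p_n(1/e) > 1/e, so no mixed strategy of the adversary choosing n can hold the 1/e-strategy down to the value 1/e. -/
/-!
Writing `(1 - x)^k / (k(k-1)) = (1 - x)^k / (k-1) - (1 - x)^k / k` and summing the logarithmic
series gives `∑_{k ≥ 2} (1 - x)^k / (k(k-1)) = 1 - x + x log x`, so `p_n(x) = -x log x + r_n(x)`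
with a nonnegative tail `r_n(x)` that tends to `0`, decreases in `x`, and equals `1/n` at
`x = 0` by telescoping. Hence `inf_n p_n(x) = -x log x`, whose maximum over `[0,1]` is `1/e`,
attained at `x = 1/e`, while `1/e ≤ sup_x p_n(x) ≤ 1/e + 1/n`. At `x = 1/e` every tail is
strictly positive, so every mixture of the `p_n(1/e)` exceeds `1/e`.
-/

open Finset Real Filter Topology

/-- The terms with `k = 0, 1` vanish, their denominator being `0`. -/
noncomputable def pwinTerm (x : ℝ) (k : ℕ) : ℝ := (1 - x) ^ k / ((k : ℝ) * ((k : ℝ) - 1))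

lemma natCast_mul_natCast_sub_one_nonneg (k : ℕ) : 0 ≤ (k : ℝ) * ((k : ℝ) - 1) := by
  rcases k with _ | k
  · simp
  · push_cast
    nlinarith [k.cast_nonneg (α := ℝ)]

lemma pwinTerm_nonneg {x : ℝ} (hx : x ≤ 1) (k : ℕ) : 0 ≤ pwinTerm x k :=
  div_nonneg (pow_nonneg (by linarith) _) (natCast_mul_natCast_sub_one_nonneg k)

lemma pwinTerm_pos {x : ℝ} (hx : x < 1) {k : ℕ} (hk : 2 ≤ k) : 0 < pwinTerm x k := by
  have hk' : (2 : ℝ) ≤ k := by exact_mod_cast hk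
  exact div_pos (pow_pos (by linarith) _) (by nlinarith)

lemma pwinTerm_le_pwinTerm {x y : ℝ} (hxy : x ≤ y) (hy : y ≤ 1) (k : ℕ) :
    pwinTerm y k ≤ pwinTerm x k :=
  div_le_div_of_nonneg_right (pow_le_pow_left₀ (by linarith) (by linarith) _)
    (natCast_mul_natCast_sub_one_nonneg k)

lemma pwin_eq_sub_sum_range (n : ℕ) (x : ℝ) :
    pwin n x = 1 - x - ∑ k ∈ range (n + 1), pwinTerm x k := by
  have hIcc : Icc 2 n ⊆ range (n + 1) := fun k hk =>
    mem_range.2 (Nat.lt_succ_of_le (mem_Icc.1 hk).2)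
  rw [pwin, ← sum_subset hIcc]
  · rfl
  · intro k hk hk'
    have : k < 2 := by simp only [mem_range, mem_Icc, not_and_or] at hk hk'; omega
    interval_cases k <;> simp [pwinTerm]

lemma pwin_zero {n : ℕ} (hn : 1 ≤ n) : pwin n 0 = (n : ℝ)⁻¹ := by
  induction n, hn using Nat.le_induction with
  | base => simp [pwin]
  | succ n hn ih =>
    rw [pwin_eq_sub_sum_range, sum_range_succ, ← sub_sub, ← pwin_eq_sub_sum_range, ih, pwinTerm]
    have : (n : ℝ) ≠ 0 := by positivity
    push_cast
    rw [sub_zero, one_pow, add_sub_cancel_right]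
    field_simp
    ring

lemma hasSum_pwinTerm_zero : HasSum (pwinTerm 0) 1 := by
  rw [hasSum_iff_tendsto_nat_of_nonneg (pwinTerm_nonneg zero_le_one), ← tendsto_add_atTop_iff_nat 2]
  have hsum (n : ℕ) : ∑ k ∈ range (n + 2), pwinTerm 0 k = 1 - 1 / ((n : ℝ) + 1) := by
    have h := pwin_eq_sub_sum_range (n + 1) 0
    rw [pwin_zero (by omega)] at h
    push_cast at h
    rw [one_div, h]
    ring
  simpa only [hsum, sub_zero] using tendsto_one_div_add_atTop_nhds_zero_nat.const_sub (1 : ℝ)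

lemma hasSum_pwinTerm_of_pos {x : ℝ} (hx0 : 0 < x) (hx2 : x < 2) :
    HasSum (pwinTerm x) (1 - x - negMulLog x) := by
  have ht : |1 - x| < 1 := by rw [abs_lt]; constructor <;> linarith
  have hlog := hasSum_pow_div_log_of_abs_lt_one ht
  rw [sub_sub_cancel] at hlog
  have hshift := (hasSum_nat_add_iff' 1).2 hlog
  rw [← hasSum_nat_add_iff' 2]
  convert (hlog.mul_left (1 - x)).sub hshift using 1
  · ext n
    have hn : ((n : ℝ) + 2 - 1) = n + 1 := by ring
    simp only [pwinTerm]
    push_cast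
    rw [hn]
    field_simp
    ring
  · simp [pwinTerm, negMulLog, sum_range_succ]
    ring

lemma hasSum_pwinTerm {x : ℝ} (hx0 : 0 ≤ x) (hx2 : x < 2) :
    HasSum (pwinTerm x) (1 - x - negMulLog x) := by
  rcases hx0.eq_or_lt with rfl | hx0
  · simpa using hasSum_pwinTerm_zero
  · exact hasSum_pwinTerm_of_pos hx0 hx2

lemma pwin_eq_negMulLog_add_tsum {x : ℝ} (hx0 : 0 ≤ x) (hx2 : x < 2) (n : ℕ) :
    pwin n x = negMulLog x + ∑' k, pwinTerm x (k + (n + 1)) := by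
  have hs := hasSum_pwinTerm hx0 hx2
  have hsplit := hs.summable.sum_add_tsum_nat_add (n + 1)
  rw [hs.tsum_eq] at hsplit
  rw [pwin_eq_sub_sum_range]
  linarith

lemma negMulLog_le_pwin {x : ℝ} (hx0 : 0 ≤ x) (hx1 : x ≤ 1) (n : ℕ) :
    negMulLog x ≤ pwin n x := by
  rw [pwin_eq_negMulLog_add_tsum hx0 (by linarith)]
  exact le_add_of_nonneg_right (tsum_nonneg fun k => pwinTerm_nonneg hx1 _)

lemma negMulLog_lt_pwin {x : ℝ} (hx0 : 0 ≤ x) (hx1 : x < 1) (n : ℕ) :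
    negMulLog x < pwin n x := by
  rw [pwin_eq_negMulLog_add_tsum hx0 (by linarith)]
  refine lt_add_of_pos_right _ (Summable.tsum_pos ?_ (fun k => pwinTerm_nonneg hx1.le _) 1 ?_)
  · exact (summable_nat_add_iff (n + 1)).2 (hasSum_pwinTerm hx0 (by linarith)).summable
  · exact pwinTerm_pos hx1 (by omega)

lemma tendsto_pwin {x : ℝ} (hx0 : 0 ≤ x) (hx2 : x < 2) :
    Tendsto (fun n => pwin n x) atTop (𝓝 (negMulLog x)) := by
  have htail := (tendsto_sum_nat_add (pwinTerm x)).comp (tendsto_add_atTop_nat 1)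
  simpa only [Function.comp_def, pwin_eq_negMulLog_add_tsum hx0 hx2, add_zero] using
    htail.const_add (negMulLog x)

lemma pwin_le_negMulLog_add_inv {x : ℝ} (hx0 : 0 ≤ x) (hx1 : x ≤ 1) {n : ℕ} (hn : 1 ≤ n) :
    pwin n x ≤ negMulLog x + (n : ℝ)⁻¹ := by
  have htail : ∑' k, pwinTerm x (k + (n + 1)) ≤ ∑' k, pwinTerm 0 (k + (n + 1)) :=
    Summable.tsum_le_tsum (fun k => pwinTerm_le_pwinTerm hx0 hx1 _)
      ((summable_nat_add_iff (n + 1)).2 (hasSum_pwinTerm hx0 (by linarith)).summable)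
      ((summable_nat_add_iff (n + 1)).2 hasSum_pwinTerm_zero.summable)
  have hzero := pwin_eq_negMulLog_add_tsum le_rfl two_pos n
  rw [pwin_zero hn, negMulLog_zero, zero_add] at hzero
  rw [pwin_eq_negMulLog_add_tsum hx0 (by linarith), hzero]
  gcongr

lemma pwin_le_one_sub {x : ℝ} (hx1 : x ≤ 1) (n : ℕ) : pwin n x ≤ 1 - x := by
  rw [pwin_eq_sub_sum_range]
  exact sub_le_self _ (sum_nonneg fun k _ => pwinTerm_nonneg hx1 k)

lemma inv_exp_one_pos : 0 < (exp 1)⁻¹ := inv_pos.2 (exp_pos 1)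

lemma inv_exp_one_lt_one : (exp 1)⁻¹ < 1 := inv_lt_one_of_one_lt₀ (one_lt_exp_iff.2 one_pos)

lemma negMulLog_inv_exp_one : negMulLog (exp 1)⁻¹ = (exp 1)⁻¹ := by
  simp [negMulLog, log_inv]

lemma negMulLog_le_inv_exp_one {x : ℝ} (hx : 0 ≤ x) : negMulLog x ≤ (exp 1)⁻¹ := by
  rcases hx.eq_or_lt with rfl | hx
  · simpa using inv_exp_one_pos.le
  have hlog := log_le_sub_one_of_pos (inv_pos.2 (mul_pos (exp_pos 1) hx))
  rw [log_inv, log_mul (exp_pos 1).ne' hx.ne', log_exp] at hlog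
  calc negMulLog x = x * -log x := by rw [negMulLog]; ring
    _ ≤ x * (exp 1 * x)⁻¹ := by gcongr; linarith
    _ = (exp 1)⁻¹ := by field_simp

lemma inv_exp_one_lt_pwin (n : ℕ) : (exp 1)⁻¹ < pwin n (exp 1)⁻¹ :=
  negMulLog_inv_exp_one.symm.trans_lt
    (negMulLog_lt_pwin inv_exp_one_pos.le inv_exp_one_lt_one n)

lemma iInf_pwin {x : ℝ} (hx0 : 0 ≤ x) (hx1 : x ≤ 1) :
    ⨅ n : {n : ℕ // 1 ≤ n}, pwin n x = negMulLog x := by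
  refine ciInf_eq_of_forall_ge_of_forall_gt_exists_lt (fun n => negMulLog_le_pwin hx0 hx1 n)
    fun w hw => ?_
  obtain ⟨n, hnw, hn⟩ := (((tendsto_pwin hx0 (by linarith)).eventually (gt_mem_nhds hw)).and
    (eventually_ge_atTop 1)).exists
  exact ⟨⟨n, hn⟩, hnw⟩

lemma iSup_iInf_pwin :
    ⨆ x : Set.Icc (0:ℝ) 1, ⨅ n : {n : ℕ // 1 ≤ n}, pwin n x = (exp 1)⁻¹ := by
  refine ciSup_eq_of_forall_le_of_forall_lt_exists_gt (fun x => ?_)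
    fun w hw => ⟨⟨_, inv_exp_one_pos.le, inv_exp_one_lt_one.le⟩, ?_⟩
  · rw [iInf_pwin x.2.1 x.2.2]
    exact negMulLog_le_inv_exp_one x.2.1
  · rwa [iInf_pwin inv_exp_one_pos.le inv_exp_one_lt_one.le, negMulLog_inv_exp_one]

lemma iInf_iSup_pwin :
    ⨅ n : {n : ℕ // 1 ≤ n}, ⨆ x : Set.Icc (0:ℝ) 1, pwin n x = (exp 1)⁻¹ := by
  refine ciInf_eq_of_forall_ge_of_forall_gt_exists_lt (fun n => ?_) fun w hw => ?_
  · have hbdd : BddAbove (Set.range fun x : Set.Icc (0:ℝ) 1 => pwin n x) :=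
      ⟨1, by rintro _ ⟨x, rfl⟩; linarith [pwin_le_one_sub x.2.2 n, x.2.1]⟩
    exact le_ciSup_of_le hbdd ⟨_, inv_exp_one_pos.le, inv_exp_one_lt_one.le⟩
      (inv_exp_one_lt_pwin n).le
  · obtain ⟨n, hn⟩ := exists_nat_one_div_lt (sub_pos.2 hw)
    refine ⟨⟨n + 1, by omega⟩, (ciSup_le fun x => ?_).trans_lt (?_ : (exp 1)⁻¹ + ((n : ℝ) + 1)⁻¹ < w)⟩
    · calc pwin (n + 1) x ≤ negMulLog x + ((n + 1 : ℕ) : ℝ)⁻¹ :=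
            pwin_le_negMulLog_add_inv x.2.1 x.2.2 (by omega)
        _ ≤ (exp 1)⁻¹ + ((n : ℝ) + 1)⁻¹ := by
            push_cast; gcongr; exact negMulLog_le_inv_exp_one x.2.1
    · rw [one_div] at hn
      linarith

lemma lt_tsum_mul_of_forall_lt {ι : Type*} {ν a : ι → ℝ} {c C : ℝ} (hν0 : ∀ i, 0 ≤ ν i)
    (hν : HasSum ν 1) (hc : ∀ i, c < a i) (hC : ∀ i, a i ≤ C) : c < ∑' i, ν i * a i := by
  obtain ⟨i, hi⟩ : ∃ i, 0 < ν i := by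
    by_contra! h
    have hzero : ν = 0 := funext fun i => le_antisymm (h i) (hν0 i)
    exact zero_ne_one (hasSum_zero.unique (hzero ▸ hν))
  have hsum : Summable fun i => ν i * a i := by
    refine Summable.of_norm_bounded (hν.summable.mul_right (|c| + |C|)) fun j => ?_
    rw [norm_mul, Real.norm_of_nonneg (hν0 j), Real.norm_eq_abs]
    refine mul_le_mul_of_nonneg_left (abs_le.2 ⟨?_, ?_⟩) (hν0 j) <;>
      linarith [hc j, hC j, neg_abs_le c, le_abs_self C, abs_nonneg c, abs_nonneg C]
  have hconst : HasSum (fun j => ν j * c) c := by simpa using hν.mul_right c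
  exact hasSum_lt (fun j => mul_le_mul_of_nonneg_left (hc j).le (hν0 j))
    (mul_lt_mul_of_pos_left (hc i) hi) hconst hsum.hasSum

/-- The game restricted to `x`-strategies has value `1/e`, yet every mixed strategy of the
adversary (`ν n` the probability of `n+1` items) leaves the `1/e`-strategy strictly above
`1/e`. -/
theorem stmt11 :
    (⨆ x : Set.Icc (0:ℝ) 1, ⨅ n : {n : ℕ // 1 ≤ n}, pwin n x) = (Real.exp 1)⁻¹ ∧
    (⨅ n : {n : ℕ // 1 ≤ n}, ⨆ x : Set.Icc (0:ℝ) 1, pwin n x) = (Real.exp 1)⁻¹ ∧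
    (∀ ν : ℕ → ℝ, (∀ n, 0 ≤ ν n) → HasSum ν 1 →
      (Real.exp 1)⁻¹ < ∑' n : ℕ, ν n * pwin (n + 1) (Real.exp 1)⁻¹) :=
  ⟨iSup_iInf_pwin, iInf_iSup_pwin, fun _ hν0 hν => lt_tsum_mul_of_forall_lt hν0 hν
    (fun n => inv_exp_one_lt_pwin (n + 1)) (fun n => pwin_le_one_sub inv_exp_one_lt_one.le (n + 1))⟩
end

section
/- Let c = 2 - √3. Then c is the unique maximum point of p_3 on [0,1], and for every n ≥ 3 the polynomial p_n is strictly increasing on [0, c]; in particular p_n(u) < p_n(v) whenever 0 ≤ u < v ≤ c and n ≥ 3. -/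
/-!
Termwise differentiation gives `p_n'(x) = -1 + Σ_{j=1}^{n-1} (1-x)^j / j`. For `n = 3` this is
`(x - (2 - √3)) (x - (2 + √3)) / 2`, which is positive left of `c = 2 - √3` and negative on `(c, 1)`,
so `c` is the unique maximiser of `p_3` on `[0,1]`. On `[0,1]` the derivative `p_n'` increases
with `n`, since the added terms are nonnegative, so `p_n' ≥ p_3' > 0` on `[0, c)` for `n ≥ 3`.
-/

open Finset Real

section OrderFacts

variable {α β : Type*} [LinearOrder α] [Preorder β] {f : α → β} {a b c y : α}

theorem apply_lt_of_strictMonoOn_of_strictAntiOn (hmono : StrictMonoOn f (Set.Icc a c))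
    (hanti : StrictAntiOn f (Set.Icc c b)) (hy : y ∈ Set.Icc a b) (hyc : y ≠ c) :
    f y < f c := by
  rcases hyc.lt_or_gt with hlt | hgt
  · exact hmono ⟨hy.1, hlt.le⟩ ⟨hy.1.trans hlt.le, le_rfl⟩ hlt
  · exact hanti ⟨le_rfl, hgt.le.trans hy.2⟩ ⟨hgt.le, hy.2⟩ hgt

end OrderFacts

noncomputable def pwinDeriv (n : ℕ) (x : ℝ) : ℝ :=
  -1 + ∑ k ∈ Icc 2 n, (1 - x) ^ (k - 1) / ((k : ℝ) - 1)

theorem hasDerivAt_pwin (n : ℕ) (x : ℝ) : HasDerivAt (pwin n) (pwinDeriv n x) x := by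
  have hlin : HasDerivAt (fun x : ℝ => 1 - x) (-1) x := by
    simpa using (hasDerivAt_id x).const_sub 1
  have hterm : ∀ k ∈ Icc 2 n, HasDerivAt (fun x : ℝ => (1 - x) ^ k / ((k : ℝ) * ((k : ℝ) - 1)))
      (-((1 - x) ^ (k - 1) / ((k : ℝ) - 1))) x := by
    intro k hk
    have hk2 : (2 : ℝ) ≤ k := by exact_mod_cast (mem_Icc.mp hk).1
    have hk1 : (k : ℝ) - 1 ≠ 0 := by linarith
    exact ((hlin.fun_pow k).div_const _).congr_deriv (by field_simp)
  refine (hlin.sub (HasDerivAt.fun_sum hterm)).congr_deriv ?_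
  rw [pwinDeriv, sum_neg_distrib]
  ring

theorem pwinDeriv_three (x : ℝ) :
    pwinDeriv 3 x = (x - (2 - √3)) * (x - (2 + √3)) / 2 := by
  have hsqrt : √3 * √3 = 3 := mul_self_sqrt (by norm_num)
  rw [pwinDeriv, show Icc (2 : ℕ) 3 = {2, 3} from rfl]
  norm_num
  linear_combination hsqrt / 2

theorem pwinDeriv_mono {m n : ℕ} (hmn : m ≤ n) {x : ℝ} (hx : x ≤ 1) :
    pwinDeriv m x ≤ pwinDeriv n x := by
  refine add_le_add_right (sum_le_sum_of_subset_of_nonneg (Icc_subset_Icc_right hmn) ?_) _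
  intro k hk _
  have hk2 : (2 : ℝ) ≤ k := by exact_mod_cast (mem_Icc.mp hk).1
  have hk1 : (0 : ℝ) < (k : ℝ) - 1 := by linarith
  have hbase : 0 ≤ 1 - x := by linarith
  positivity

theorem sqrt_three_lt_two : √3 < 2 := by
  rw [sqrt_lt' two_pos]; norm_num

theorem one_lt_sqrt_three : 1 < √3 := by
  rw [lt_sqrt zero_le_one]; norm_num

theorem pwinDeriv_pos {n : ℕ} (hn : 3 ≤ n) {x : ℝ} (hx : x < 2 - √3) : 0 < pwinDeriv n x := by
  have hsqrt : 1 < √3 := one_lt_sqrt_three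
  have h3 : 0 < pwinDeriv 3 x := by
    rw [pwinDeriv_three]
    exact div_pos (mul_pos_of_neg_of_neg (by linarith) (by linarith)) two_pos
  exact h3.trans_le (pwinDeriv_mono hn (by linarith))

theorem pwinDeriv_three_neg {x : ℝ} (hx : x ∈ Set.Ioo (2 - √3) (2 + √3)) : pwinDeriv 3 x < 0 := by
  rw [pwinDeriv_three]
  exact div_neg_of_neg_of_pos (mul_neg_of_pos_of_neg (by linarith [hx.1]) (by linarith [hx.2]))
    two_pos

theorem continuous_pwin (n : ℕ) : Continuous (pwin n) :=
  continuous_iff_continuousAt.2 fun x => (hasDerivAt_pwin n x).continuousAt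

theorem strictMonoOn_pwin {n : ℕ} (hn : 3 ≤ n) : StrictMonoOn (pwin n) (Set.Iic (2 - √3)) := by
  refine strictMonoOn_of_deriv_pos (convex_Iic _) (continuous_pwin n).continuousOn fun x hx => ?_
  rw [interior_Iic] at hx
  rw [(hasDerivAt_pwin n x).deriv]
  exact pwinDeriv_pos hn hx

theorem strictAntiOn_pwin_three : StrictAntiOn (pwin 3) (Set.Icc (2 - √3) (2 + √3)) := by
  refine strictAntiOn_of_deriv_neg (convex_Icc _ _) (continuous_pwin 3).continuousOn fun x hx => ?_
  rw [interior_Icc] at hx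
  rw [(hasDerivAt_pwin 3 x).deriv]
  exact pwinDeriv_three_neg hx

/-- `c = 2 - √3` is the unique maximum point of `p_3` on `[0,1]`, and every `p_n`,
`n ≥ 3`, is strictly increasing on `[0,c]`. -/
theorem stmt16 :
    IsMaxOn (pwin 3) (Set.Icc (0:ℝ) 1) (2 - Real.sqrt 3) ∧
    (∀ y ∈ Set.Icc (0:ℝ) 1, IsMaxOn (pwin 3) (Set.Icc (0:ℝ) 1) y → y = 2 - Real.sqrt 3) ∧
    (∀ n : ℕ, 3 ≤ n → StrictMonoOn (pwin n) (Set.Icc (0:ℝ) (2 - Real.sqrt 3))) ∧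
    (∀ n : ℕ, 3 ≤ n → ∀ u v : ℝ, 0 ≤ u → u < v → v ≤ 2 - Real.sqrt 3 →
      pwin n u < pwin n v) := by
  have hc : 2 - √3 ∈ Set.Icc (0 : ℝ) 1 := by
    constructor <;> linarith [sqrt_three_lt_two, sqrt_nonneg 3, one_lt_sqrt_three]
  have hlt : ∀ y ∈ Set.Icc (0 : ℝ) 1, y ≠ 2 - √3 → pwin 3 y < pwin 3 (2 - √3) :=
    fun y hy hyc => apply_lt_of_strictMonoOn_of_strictAntiOn
      ((strictMonoOn_pwin le_rfl).mono Set.Icc_subset_Iic_self)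
      (strictAntiOn_pwin_three.mono (Set.Icc_subset_Icc_right (by linarith [sqrt_nonneg 3])))
      hy hyc
  refine ⟨fun y hy => ?_, fun y hy hmax => ?_,
    fun n hn => (strictMonoOn_pwin hn).mono Set.Icc_subset_Iic_self,
    fun n hn u v _ huv hv => strictMonoOn_pwin hn (huv.le.trans hv : u ≤ _) hv huv⟩
  · rcases eq_or_ne y (2 - √3) with rfl | hyc
    · exact le_refl (pwin 3 (2 - √3))
    · exact (hlt y hy hyc).le
  · by_contra hyc
    exact (hmax hc).not_gt (hlt y hy hyc)
end
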